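/- arXiv:math/0101065 — 2 statements merged into one kernel-verified Lean document; each statement's English description precedes it below -/
import Mathlib

section
/- Let n ≥ 2 be an integer, let x ∈ ℝⁿ with x ≠ 0, and let r > 0. Then ∫_{S^{n−1}} e^{i r ⟨x,ω⟩} dσ(ω) = (2π)^{n/2} (r|x|)^{1 − n/2} J_{n/2 − 1}(r|x|), where σ is the surface measure on the unit sphere S^{n−1} ⊂ ℝⁿ. -/
/-!
Expand `e^{is⟨u,ω⟩}` (with `|u| = 1`, `s = r|x|`) in its exponential series and integrate term by
term over the sphere. The sphere moments `∫ ⟨u,ω⟩^k dσ` come from computing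
`∫_{ℝⁿ} ⟨u,x⟩^k e^{-|x|²} dx` in two ways: in polar coordinates it is the sphere moment times
`Γ((k+n)/2)/2`, and in an orthonormal basis starting with `u` it is the one-dimensional moment
`∫ t^k e^{-t²} dt` (zero for odd `k`, `Γ(m+1/2)` for `k = 2m`) times `π^{(n-1)/2}`. The odd terms
of the series therefore vanish, and `Γ(m+1/2) 4^m m! = (2m)! √π` turns the even ones into the
terms of the Bessel series.
-/

open MeasureTheory Real Filter

noncomputable def besselJ (ν t : ℝ) : ℝ :=
  ∑' r : ℕ, (-1 : ℝ) ^ r * t ^ (ν + 2 * (r : ℝ)) /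
    ((2 : ℝ) ^ (ν + 2 * (r : ℝ)) * (Nat.factorial r : ℝ) * Real.Gamma (ν + (r : ℝ) + 1))

open Set Metric
open scoped Nat RealInnerProductSpace

lemma integral_Ioi_pow_mul_exp_neg_sq (k : ℕ) :
    ∫ t in Ioi (0 : ℝ), t ^ k * rexp (-t ^ 2) = Gamma ((k + 1) / 2) / 2 := by
  have h := integral_rpow_mul_exp_neg_rpow two_pos (neg_one_lt_zero.trans_le k.cast_nonneg)
  norm_cast at h
  rw [h]
  push_cast
  ring

lemma integral_pow_mul_exp_neg_sq_of_even (m : ℕ) :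
    ∫ t : ℝ, t ^ (2 * m) * rexp (-t ^ 2) = Gamma (m + 1 / 2) := by
  have h := integral_comp_abs (f := fun t : ℝ ↦ t ^ (2 * m) * rexp (-t ^ 2))
  simp only [(even_two_mul m).pow_abs, sq_abs] at h
  rw [h, integral_Ioi_pow_mul_exp_neg_sq]
  push_cast
  ring_nf

lemma integral_pow_mul_exp_neg_sq_of_odd {k : ℕ} (hk : Odd k) :
    ∫ t : ℝ, t ^ k * rexp (-t ^ 2) = 0 := by
  have h := integral_neg_eq_self (fun t : ℝ ↦ t ^ k * rexp (-t ^ 2)) volume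
  simp only [hk.neg_pow, neg_sq, neg_mul, integral_neg] at h
  linarith

lemma Real.Gamma_nat_add_half_mul (m : ℕ) :
    Gamma (m + 1 / 2) * (4 ^ m * m !) = (2 * m)! * √π := by
  rw [Real.Gamma_nat_add_half, show (4 : ℝ) ^ m = 2 ^ m * 2 ^ m by rw [← mul_pow]; norm_num]
  cases m with
  | zero => simp
  | succ m =>
    have h := Nat.factorial_eq_mul_doubleFactorial (2 * m + 1)
    rw [show 2 * m + 1 + 1 = 2 * (m + 1) by ring, Nat.doubleFactorial_two_mul] at h
    rw [show 2 * (m + 1) - 1 = 2 * m + 1 by omega, h]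
    push_cast
    field_simp

lemma integral_volumeIoiPow {G : Type*} [NormedAddCommGroup G] [NormedSpace ℝ G] (n : ℕ)
    (f : ℝ → G) :
    ∫ t : Ioi (0 : ℝ), f t ∂(Measure.volumeIoiPow n) = ∫ t in Ioi (0 : ℝ), t ^ n • f t := by
  simp only [Measure.volumeIoiPow, ENNReal.ofReal]
  rw [integral_withDensity_eq_integral_smul
      (measurable_subtype_coe.pow_const n).real_toNNReal,
    integral_subtype_comap measurableSet_Ioi fun t ↦ Real.toNNReal (t ^ n) • f t]
  refine setIntegral_congr_fun measurableSet_Ioi fun t ht ↦ ?_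
  rw [NNReal.smul_def, Real.coe_toNNReal _ (pow_nonneg (le_of_lt ht) _)]

section Polar

variable {F : Type*} [NormedAddCommGroup F] [NormedSpace ℝ F] [FiniteDimensional ℝ F]
  [MeasurableSpace F] [BorelSpace F] [Nontrivial F] (μ : Measure F) [μ.IsAddHaarMeasure]

lemma integral_mul_exp_neg_norm_sq_of_homogeneous {f : F → ℝ} {k : ℕ}
    (hf : ∀ c : ℝ, 0 < c → ∀ x, f (c • x) = c ^ k * f x) :
    ∫ x, f x * rexp (-‖x‖ ^ 2) ∂μ
      = (∫ ω, f ω ∂μ.toSphere) * (Gamma ((k + Module.finrank ℝ F) / 2) / 2) := by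
  have hd : 0 < Module.finrank ℝ F := Module.finrank_pos
  calc ∫ x, f x * rexp (-‖x‖ ^ 2) ∂μ
      = ∫ x : ({0}ᶜ : Set F), f x * rexp (-‖(x : F)‖ ^ 2) ∂(μ.comap (↑)) := by
        rw [integral_subtype_comap (measurableSet_singleton _).compl
          fun x ↦ f x * rexp (-‖x‖ ^ 2), restrict_compl_singleton]
    _ = ∫ p : sphere (0 : F) 1 × Ioi (0 : ℝ), f p.1 * ((p.2 : ℝ) ^ k * rexp (-(p.2 : ℝ) ^ 2))
          ∂(μ.toSphere.prod (Measure.volumeIoiPow (Module.finrank ℝ F - 1))) := by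
        rw [← μ.measurePreserving_homeomorphUnitSphereProd.integral_comp
          (Homeomorph.measurableEmbedding _)]
        congr 1 with x
        have hx : ‖(x : F)‖ ≠ 0 := norm_ne_zero_iff.2 x.2
        simp only [homeomorphUnitSphereProd_apply_fst_coe, homeomorphUnitSphereProd_apply_snd_coe]
        have hfx : f x = ‖(x : F)‖ ^ k * f (‖(x : F)‖⁻¹ • (x : F)) := by
          rw [← hf _ (norm_pos_iff.2 x.2), smul_inv_smul₀ hx]
        rw [hfx]
        ring
    _ = (∫ ω, f ω ∂μ.toSphere)
          * ∫ t : Ioi (0 : ℝ), (t : ℝ) ^ k * rexp (-(t : ℝ) ^ 2)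
            ∂(Measure.volumeIoiPow (Module.finrank ℝ F - 1)) :=
          integral_prod_mul (fun ω : sphere (0 : F) 1 ↦ f ω)
            fun t : Ioi (0 : ℝ) ↦ (t : ℝ) ^ k * rexp (-(t : ℝ) ^ 2)
    _ = _ := by
        rw [integral_volumeIoiPow _ fun t ↦ t ^ k * rexp (-t ^ 2)]
        simp only [smul_eq_mul, ← mul_assoc, ← pow_add]
        rw [integral_Ioi_pow_mul_exp_neg_sq]
        push_cast [Nat.cast_sub hd]
        ring_nf

end Polar

lemma integral_coord_pow_mul_exp_neg_norm_sq {ι : Type*} [Fintype ι] [DecidableEq ι]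
    (i₀ : ι) (k : ℕ) :
    ∫ y : EuclideanSpace ℝ ι, y i₀ ^ k * rexp (-‖y‖ ^ 2)
      = (∫ t : ℝ, t ^ k * rexp (-t ^ 2)) * √π ^ (Fintype.card ι - 1) := by
  let g : ι → ℝ → ℝ := fun i t ↦ t ^ (if i = i₀ then k else 0) * rexp (-t ^ 2)
  have hg : ∀ i, ∫ t, g i t = if i = i₀ then ∫ t : ℝ, t ^ k * rexp (-t ^ 2) else √π := by
    intro i
    split_ifs with hi
    · simp [g, hi]
    · simpa [g, hi] using integral_gaussian 1
  rw [← (PiLp.volume_preserving_toLp ι).integral_comp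
    (MeasurableEquiv.toLp 2 (ι → ℝ)).measurableEmbedding]
  calc ∫ y : ι → ℝ, (WithLp.toLp 2 y) i₀ ^ k * rexp (-‖WithLp.toLp 2 y‖ ^ 2)
      = ∫ y : ι → ℝ, ∏ i, g i (y i) := by
        congr 1 with y
        simp only [g, Finset.prod_mul_distrib, pow_ite, pow_zero, Finset.prod_ite_eq',
          Finset.mem_univ, if_true, ← Real.exp_sum, Finset.sum_neg_distrib,
          EuclideanSpace.real_norm_sq_eq]
    _ = _ := by
        rw [integral_fintype_prod_volume_eq_prod, Finset.prod_congr rfl (fun i _ ↦ hg i),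
          Finset.prod_ite, Finset.filter_eq', Finset.filter_ne']
        simp [Finset.card_erase_of_mem]

lemma hasSum_integral_cexp_mul {α : Type*} [MeasurableSpace α] (μ : Measure α)
    [IsFiniteMeasure μ] {c : α → ℂ} (hc : AEStronglyMeasurable c μ) {C : ℝ}
    (hC : ∀ a, ‖c a‖ ≤ C) (z : ℂ) :
    HasSum (fun k : ℕ ↦ z ^ k / k ! * ∫ a, c a ^ k ∂μ) (∫ a, Complex.exp (z * c a) ∂μ) := by
  have h := hasSum_integral_of_dominated_convergence (μ := μ)
    (F := fun k a ↦ (z * c a) ^ k / k !) (f := fun a ↦ Complex.exp (z * c a))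
    (fun k _ ↦ (‖z‖ * C) ^ k / k !)
    (fun k ↦ by fun_prop)
    (fun k ↦ .of_forall fun a ↦ by
      rw [norm_div, norm_pow, norm_mul, Complex.norm_natCast]
      gcongr
      exact hC a)
    (.of_forall fun _ ↦ Real.summable_pow_div_factorial _) (integrable_const _)
    (.of_forall fun a ↦ by
      rw [Complex.exp_eq_exp_ℂ]
      exact NormedSpace.expSeries_div_hasSum_exp _)
  simpa only [mul_pow, mul_div_right_comm, integral_const_mul] using h

noncomputable def besselJTerm (ν t : ℝ) (m : ℕ) : ℝ :=
  (-1) ^ m * t ^ (ν + 2 * (m : ℝ)) / (2 ^ (ν + 2 * (m : ℝ)) * m ! * Gamma (ν + m + 1))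

lemma besselJ_eq_tsum (ν t : ℝ) : besselJ ν t = ∑' m, besselJTerm ν t m := rfl

lemma two_pi_rpow_mul_rpow_mul_besselJTerm {s : ℝ} (hs : 0 < s) (a : ℝ) (m : ℕ) :
    (2 * π) ^ a * s ^ (1 - a) * besselJTerm (a - 1) s m
      = 2 * π ^ a * ((-1) ^ m * s ^ (2 * m)) / (4 ^ m * m ! * Gamma (m + a)) := by
  have h2m : (2 * m : ℝ) = (2 * m : ℕ) := by push_cast; ring
  have hs' : s ^ (1 - a) * s ^ (a - 1 + 2 * (m : ℝ)) = s ^ (2 * m) := by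
    rw [← rpow_add hs, h2m, show 1 - a + (a - 1 + ((2 * m : ℕ) : ℝ)) = ((2 * m : ℕ) : ℝ) by ring,
      rpow_natCast]
  have h2 : (2 : ℝ) ^ (a - 1 + 2 * (m : ℝ)) * 2 = 2 ^ a * 4 ^ m := by
    rw [h2m, rpow_add two_pos, rpow_natCast, rpow_sub_one two_ne_zero, pow_mul]
    field_simp
    norm_num
  rw [besselJTerm, show a - 1 + m + 1 = m + a by ring, mul_rpow zero_le_two pi_pos.le]
  rcases eq_or_ne (Gamma (m + a)) 0 with hΓ | hΓ
  · simp [hΓ]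
  rw [← hs']
  have : (2 : ℝ) ^ (a - 1 + 2 * (m : ℝ)) ≠ 0 := by positivity
  field_simp
  linear_combination -h2

section InnerProductSpace

variable {E : Type*} [NormedAddCommGroup E] [InnerProductSpace ℝ E] [FiniteDimensional ℝ E]
  [MeasurableSpace E] [BorelSpace E]

lemma integral_inner_pow_mul_exp_neg_norm_sq {u : E} (hu : ‖u‖ = 1) (k : ℕ) :
    ∫ x : E, ⟪u, x⟫ ^ k * rexp (-‖x‖ ^ 2)
      = (∫ t : ℝ, t ^ k * rexp (-t ^ 2)) * √π ^ (Module.finrank ℝ E - 1) := by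
  have : Nontrivial E := ⟨⟨u, 0, by rintro rfl; simp at hu⟩⟩
  let i₀ : Fin (Module.finrank ℝ E) := ⟨0, Module.finrank_pos⟩
  obtain ⟨b, hb⟩ := Orthonormal.exists_orthonormalBasis_extension_of_card_eq
    (v := fun _ ↦ u) (s := {i₀}) (Fintype.card_fin _).symm
    (orthonormal_subsingleton_iff.2 fun _ ↦ hu)
  have h := integral_coord_pow_mul_exp_neg_norm_sq i₀ k
  rw [Fintype.card_fin] at h
  rw [← h, ← b.measurePreserving_measurableEquiv.integral_comp']
  congr 1 with x
  simp [OrthonormalBasis.measurableEquiv, b.repr_apply_apply, hb i₀ rfl]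

lemma integral_sphere_inner_pow_mul_Gamma {u : E} (hu : ‖u‖ = 1) (k : ℕ) :
    (∫ ω : sphere (0 : E) 1, ⟪u, (ω : E)⟫ ^ k ∂(volume : Measure E).toSphere)
        * (Gamma ((k + Module.finrank ℝ E) / 2) / 2)
      = (∫ t : ℝ, t ^ k * rexp (-t ^ 2)) * √π ^ (Module.finrank ℝ E - 1) := by
  have : Nontrivial E := ⟨⟨u, 0, by rintro rfl; simp at hu⟩⟩
  rw [← integral_mul_exp_neg_norm_sq_of_homogeneous (volume : Measure E)
    (f := fun x ↦ ⟪u, x⟫ ^ k) fun c _ x ↦ by rw [inner_smul_right, mul_pow],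
    integral_inner_pow_mul_exp_neg_norm_sq hu]

lemma integral_sphere_inner_pow_of_odd {u : E} (hu : ‖u‖ = 1) {k : ℕ} (hk : Odd k) :
    ∫ ω : sphere (0 : E) 1, ⟪u, (ω : E)⟫ ^ k ∂(volume : Measure E).toSphere = 0 := by
  have : Nontrivial E := ⟨⟨u, 0, by rintro rfl; simp at hu⟩⟩
  have hd : 0 < Module.finrank ℝ E := Module.finrank_pos
  have h := integral_sphere_inner_pow_mul_Gamma hu k
  rw [integral_pow_mul_exp_neg_sq_of_odd hk, zero_mul] at h
  exact (mul_eq_zero.1 h).resolve_right (by positivity)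

lemma integral_sphere_inner_pow_two_mul {u : E} (hu : ‖u‖ = 1) (m : ℕ) :
    ∫ ω : sphere (0 : E) 1, ⟪u, (ω : E)⟫ ^ (2 * m) ∂(volume : Measure E).toSphere
      = 2 * π ^ ((Module.finrank ℝ E : ℝ) / 2) * (2 * m)!
          / (4 ^ m * m ! * Gamma (m + Module.finrank ℝ E / 2)) := by
  have : Nontrivial E := ⟨⟨u, 0, by rintro rfl; simp at hu⟩⟩
  have hd : 0 < Module.finrank ℝ E := Module.finrank_pos
  have hπ : √π ^ (Module.finrank ℝ E - 1) * √π = π ^ ((Module.finrank ℝ E : ℝ) / 2) := by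
    rw [← pow_succ, Nat.sub_add_cancel hd, sqrt_eq_rpow, ← rpow_natCast, ← rpow_mul pi_pos.le]
    ring_nf
  have h := integral_sphere_inner_pow_mul_Gamma hu (2 * m)
  rw [integral_pow_mul_exp_neg_sq_of_even, show ((2 * m : ℕ) + (Module.finrank ℝ E : ℝ)) / 2
    = m + Module.finrank ℝ E / 2 by push_cast; ring] at h
  rw [← hπ, eq_div_iff (by positivity)]
  linear_combination (2 * 4 ^ m * m !) * h
    + 2 * √π ^ (Module.finrank ℝ E - 1) * Real.Gamma_nat_add_half_mul m

theorem integral_sphere_cexp_inner_eq_besselJ {x : E} (hx : x ≠ 0) {r : ℝ} (hr : 0 < r) :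
    ∫ ω : sphere (0 : E) 1, Complex.exp (Complex.I * ((r * ⟪x, (ω : E)⟫ : ℝ) : ℂ))
        ∂(volume : Measure E).toSphere
      = (((2 * π) ^ ((Module.finrank ℝ E : ℝ) / 2) * (r * ‖x‖) ^ (1 - (Module.finrank ℝ E : ℝ) / 2)
          * besselJ ((Module.finrank ℝ E : ℝ) / 2 - 1) (r * ‖x‖) : ℝ) : ℂ) := by
  set s := r * ‖x‖
  set u := ‖x‖⁻¹ • x
  have hs : 0 < s := mul_pos hr (norm_pos_iff.2 hx)
  have hu : ‖u‖ = 1 := by simp [u, norm_smul, hx]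
  have hxu : ∀ ω : E, r * ⟪x, ω⟫ = s * ⟪u, ω⟫ := fun ω ↦ by
    simp only [s, u, real_inner_smul_left]
    field_simp [norm_ne_zero_iff.2 hx]
  have hseries := hasSum_integral_cexp_mul (volume : Measure E).toSphere
    (c := fun ω ↦ (⟪u, (ω : E)⟫ : ℂ)) (by fun_prop) (C := 1)
    (fun ω ↦ by simpa [hu] using abs_real_inner_le_norm u ω) (Complex.I * s)
  simp only [← Complex.ofReal_pow, integral_complex_ofReal] at hseries
  have heven := ((mul_right_injective₀ two_ne_zero).hasSum_iff fun k hk ↦ by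
    rw [integral_sphere_inner_pow_of_odd hu, Complex.ofReal_zero, mul_zero]
    simpa [Nat.odd_iff, Nat.two_dvd_ne_zero, eq_comm] using hk).2 hseries
  conv_lhs => simp only [hxu, Complex.ofReal_mul, ← mul_assoc]
  rw [besselJ_eq_tsum, ← tsum_mul_left, Complex.ofReal_tsum, ← heven.tsum_eq]
  refine tsum_congr fun m ↦ ?_
  rw [two_pi_rpow_mul_rpow_mul_besselJTerm hs, Function.comp_apply, integral_sphere_inner_pow_two_mul hu,
    mul_pow, pow_mul, Complex.I_sq]
  have : ((2 * m)! : ℂ) ≠ 0 := Nat.cast_ne_zero.2 (Nat.factorial_ne_zero _)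
  push_cast
  field_simp

end InnerProductSpace

theorem integral_sphere_exp_inner_general (n : ℕ) (x : EuclideanSpace ℝ (Fin n))
    (hx : x ≠ 0) (r : ℝ) (hr : 0 < r) :
    ∫ ω : Metric.sphere (0 : EuclideanSpace ℝ (Fin n)) 1,
        Complex.exp (Complex.I * ((r * (inner ℝ x (ω : EuclideanSpace ℝ (Fin n))) : ℝ) : ℂ))
        ∂((volume : Measure (EuclideanSpace ℝ (Fin n))).toSphere)
      = (((2 * Real.pi) ^ ((n : ℝ) / 2) * (r * ‖x‖) ^ (1 - (n : ℝ) / 2) *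
          besselJ ((n : ℝ) / 2 - 1) (r * ‖x‖) : ℝ) : ℂ) := by
  simpa only [finrank_euclideanSpace_fin] using integral_sphere_cexp_inner_eq_besselJ hx hr

/-- The integral of `e^{ir⟨x,ω⟩}` over the unit sphere `S^{n-1}` (with its surface
measure) equals `(2π)^{n/2} (r|x|)^{1-n/2} J_{n/2-1}(r|x|)`. -/
theorem integral_sphere_exp_inner (n : ℕ) (hn : 2 ≤ n) (x : EuclideanSpace ℝ (Fin n))
    (hx : x ≠ 0) (r : ℝ) (hr : 0 < r) :
    ∫ ω : Metric.sphere (0 : EuclideanSpace ℝ (Fin n)) 1,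
        Complex.exp (Complex.I * ((r * (inner ℝ x (ω : EuclideanSpace ℝ (Fin n))) : ℝ) : ℂ))
        ∂((volume : Measure (EuclideanSpace ℝ (Fin n))).toSphere)
      = (((2 * Real.pi) ^ ((n : ℝ) / 2) * (r * ‖x‖) ^ (1 - (n : ℝ) / 2) *
          besselJ ((n : ℝ) / 2 - 1) (r * ‖x‖) : ℝ) : ℂ) :=
  integral_sphere_exp_inner_general n x hx r hr
end

section
/- Let q : ℝ → ℝ be continuous, let b ∈ ℝ, and let u₁, u₂ : ℝ → ℝ be twice continuously differentiable functions satisfying u₁'' = q·u₁ and u₂'' = q·u₂ on ℝ, whose Wronskian at b satisfies u₁(b)u₂'(b) − u₁'(b)u₂(b) = −1. Define G : ℝ → ℝ by G(y) = u₂(b)·u₁(y) for y ≥ b and G(y) = u₁(b)·u₂(y) for y ≤ b (the two definitions agree at y = b). Then G is a fundamental solution of the operator d²/dy² − q relative to b: for every smooth compactly supported φ : ℝ → ℝ, ∫_ℝ G(y) · ( φ''(y) − q(y)φ(y) ) dy = φ(b). -/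
open MeasureTheory Real Filter Set

lemma green_aux_ccs {f : ℝ → ℝ} (hf : HasCompactSupport f) :
    Tendsto f atTop (nhds 0) ∧ Tendsto f atBot (nhds 0) := by
  rw [hasCompactSupport_iff_eventuallyEq, Filter.coclosedCompact_eq_cocompact] at hf
  constructor
  · exact Tendsto.congr' (hf.filter_mono _root_.atTop_le_cocompact).symm tendsto_const_nhds
  · exact Tendsto.congr' (hf.filter_mono _root_.atBot_le_cocompact).symm tendsto_const_nhds

lemma green_aux (q : ℝ → ℝ) (hq : Continuous q) (b : ℝ)
    (u : ℝ → ℝ) (h : ContDiff ℝ 2 u)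
    (hu : ∀ y, deriv (deriv u) y = q y * u y)
    (φ : ℝ → ℝ) (hφ : ContDiff ℝ (⊤ : ℕ∞) φ) (hc : HasCompactSupport φ) :
    (∫ y in Set.Ioi b, u y * (deriv (deriv φ) y - q y * φ y)
      = -(u b * deriv φ b - deriv u b * φ b)) ∧
    (∫ y in Set.Iic b, u y * (deriv (deriv φ) y - q y * φ y)
      = u b * deriv φ b - deriv u b * φ b) ∧
    IntegrableOn (fun y => u y * (deriv (deriv φ) y - q y * φ y)) (Set.Ioi b) ∧
    IntegrableOn (fun y => u y * (deriv (deriv φ) y - q y * φ y)) (Set.Iic b) := by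
  have h11 : ContDiff ℝ (1 + 1) u := by
    rw [show ((1 : WithTop ℕ∞) + 1) = 2 by norm_num]; exact h
  have hu'c1 : ContDiff ℝ 1 (deriv u) := (contDiff_succ_iff_deriv.mp h11).2.2
  have hu_cont : Continuous u := h.continuous
  have hu' : Differentiable ℝ u := h.differentiable (by norm_num)
  have hu'cont : Continuous (deriv u) := hu'c1.continuous
  have hu''diff : Differentiable ℝ (deriv u) := hu'c1.differentiable one_ne_zero
  have hphiI : ContDiff ℝ ((⊤ : ℕ∞) : WithTop ℕ∞) φ := hφ.of_le (by simp)
  have hφ1 : Differentiable ℝ φ := hphiI.differentiable (by norm_num)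
  have hφ'c : ContDiff ℝ ((⊤ : ℕ∞) : WithTop ℕ∞) (deriv φ) := (contDiff_infty_iff_deriv.mp hphiI).2
  have hφ'diff : Differentiable ℝ (deriv φ) := hφ'c.differentiable (by norm_num)
  have hφ''cont : Continuous (deriv (deriv φ)) :=
    (contDiff_infty_iff_deriv.mp hφ'c).2.continuous
  have hcs' : HasCompactSupport (deriv φ) := hc.deriv
  have hcs'' : HasCompactSupport (deriv (deriv φ)) := hcs'.deriv
  set F : ℝ → ℝ := fun y => u y * deriv φ y - deriv u y * φ y with hF
  have hFcs : HasCompactSupport F :=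
    HasCompactSupport.comp₂_left (hcs'.mul_left (f := u)) (hc.mul_left (f := deriv u))
      (sub_zero 0)
  obtain ⟨htop, hbot⟩ := green_aux_ccs hFcs
  have hFd : ∀ y, HasDerivAt F (u y * (deriv (deriv φ) y - q y * φ y)) y := by
    intro y
    have hd1 : HasDerivAt (fun y => u y * deriv φ y)
        (deriv u y * deriv φ y + u y * deriv (deriv φ) y) y :=
      (hu' y).hasDerivAt.mul (hφ'diff y).hasDerivAt
    have hd2 : HasDerivAt (fun y => deriv u y * φ y)
        (deriv (deriv u) y * φ y + deriv u y * deriv φ y) y :=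
      (hu''diff y).hasDerivAt.mul (hφ1 y).hasDerivAt
    have := hd1.sub hd2
    refine this.congr_deriv ?_
    rw [hu y]; ring
  have hψcs : HasCompactSupport (fun y => deriv (deriv φ) y - q y * φ y) :=
    HasCompactSupport.comp₂_left hcs'' (hc.mul_left (f := q)) (sub_zero 0)
  have hcont : Continuous (fun y => u y * (deriv (deriv φ) y - q y * φ y)) :=
    hu_cont.mul (hφ''cont.sub (hq.mul hphiI.continuous))
  have hint : Integrable (fun y => u y * (deriv (deriv φ) y - q y * φ y)) :=
    hcont.integrable_of_hasCompactSupport (hψcs.mul_left (f := u))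
  have hFcont : Continuous F :=
    (hu_cont.mul hφ'c.continuous).sub (hu'cont.mul hphiI.continuous)
  refine ⟨?_, ?_, hint.integrableOn, hint.integrableOn⟩
  · have := integral_Ioi_of_hasDerivAt_of_tendsto (f := F)
      (f' := fun y => u y * (deriv (deriv φ) y - q y * φ y)) (a := b)
      hFcont.continuousWithinAt (fun x _ => hFd x) hint.integrableOn htop
    rw [this]; simp [hF]
  · have := integral_Iic_of_hasDerivAt_of_tendsto (f := F)
      (f' := fun y => u y * (deriv (deriv φ) y - q y * φ y)) (a := b)
      hFcont.continuousWithinAt (fun x _ => hFd x) hint.integrableOn hbot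
    rw [this]; simp [hF]

/-- If `u₁'' = q u₁`, `u₂'' = q u₂` and the Wronskian of `u₁, u₂` at `b` equals `-1`, then
`G(y) = u₂(b) u₁(y)` for `y ≥ b`, `G(y) = u₁(b) u₂(y)` for `y ≤ b`, is a fundamental
solution of `d²/dy² - q` relative to `b`. -/
theorem greens_function_second_order (q : ℝ → ℝ) (hq : Continuous q) (b : ℝ)
    (u₁ u₂ : ℝ → ℝ) (h1 : ContDiff ℝ 2 u₁) (h2 : ContDiff ℝ 2 u₂)
    (hu1 : ∀ y, deriv (deriv u₁) y = q y * u₁ y)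
    (hu2 : ∀ y, deriv (deriv u₂) y = q y * u₂ y)
    (hW : u₁ b * deriv u₂ b - deriv u₁ b * u₂ b = -1) :
    ∀ φ : ℝ → ℝ, ContDiff ℝ (⊤ : ℕ∞) φ → HasCompactSupport φ →
      ∫ y : ℝ, (if b ≤ y then u₂ b * u₁ y else u₁ b * u₂ y) *
          (deriv (deriv φ) y - q y * φ y)
        = φ b := by
  intro φ hφ hc
  obtain ⟨hI1, _, hInt1, _⟩ := green_aux q hq b u₁ h1 hu1 φ hφ hc
  obtain ⟨_, hI2, _, hInt2⟩ := green_aux q hq b u₂ h2 hu2 φ hφ hc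
  set ψ : ℝ → ℝ := fun y => deriv (deriv φ) y - q y * φ y with hψ
  set G : ℝ → ℝ := fun y => (if b ≤ y then u₂ b * u₁ y else u₁ b * u₂ y) * ψ y with hG
  have hGIic : ∀ y ∈ Set.Iic b, G y = u₁ b * (u₂ y * ψ y) := by
    intro y hy
    simp only [hG]
    have hy' : y ≤ b := hy
    rcases lt_or_eq_of_le hy' with hlt | rfl
    · rw [if_neg (not_le.mpr hlt)]; ring
    · rw [if_pos le_rfl]; ring
  have hGIoi : ∀ y ∈ Set.Ioi b, G y = u₂ b * (u₁ y * ψ y) := by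
    intro y hy
    simp only [hG, if_pos (le_of_lt (Set.mem_Ioi.mp hy))]; ring
  have hL : IntegrableOn G (Set.Iic b) := by
    refine MeasureTheory.IntegrableOn.congr_fun (hInt2.const_mul (u₁ b)) ?_ measurableSet_Iic
    intro y hy
    exact (hGIic y hy).symm
  have hR : IntegrableOn G (Set.Ioi b) := by
    refine MeasureTheory.IntegrableOn.congr_fun (hInt1.const_mul (u₂ b)) ?_ measurableSet_Ioi
    intro y hy
    exact (hGIoi y hy).symm
  have hsplit := intervalIntegral.integral_Iic_add_Ioi (μ := volume) (b := b) (f := G) hL hR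
  have hmain : (∫ y : ℝ, G y) = φ b := by
    rw [← hsplit]
    have e1 : ∫ y in Set.Iic b, G y = u₁ b * ∫ y in Set.Iic b, u₂ y * ψ y := by
      rw [← integral_const_mul]
      exact setIntegral_congr_fun measurableSet_Iic hGIic
    have e2 : ∫ y in Set.Ioi b, G y = u₂ b * ∫ y in Set.Ioi b, u₁ y * ψ y := by
      rw [← integral_const_mul]
      exact setIntegral_congr_fun measurableSet_Ioi hGIoi
    rw [e1, e2, hI1, hI2]
    linear_combination (-(φ b)) * hW
  exact hmain
end
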